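/- Let K be a finite field of order q and S a sharply transitive subset of PGL(2,K) on P^1(K) containing the identity. For any g, h ∈ S \ {1}, there exists k ∈ S with k ≠ g and k ≠ h such that the element g^{-1} k h^{-1} fixes at least two distinct points of P^1(K). -/

import Mathlib

open Matrix Projectivization

noncomputable section

variable {K : Type*} [Field K]

/-- The projective line over `K`. -/
abbrev P1 (K : Type*) [Field K] := Projectivization K (Fin 2 → K)

/-- `PGL(2,K)`, the quotient of `GL(2,K)` by its center. -/
abbrev PGL2 (K : Type*) [Field K] :=
  GL (Fin 2) K ⧸ Subgroup.center (GL (Fin 2) K)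

/-- The canonical projection `GL(2,K) → PGL(2,K)`. -/
def PGL2.proj (K : Type*) [Field K] : GL (Fin 2) K →* PGL2 K :=
  QuotientGroup.mk' _

instance glAction : MulAction (GL (Fin 2) K) (P1 K) where
  smul g x := x.map ((Matrix.GeneralLinearGroup.toLin g).toLinearEquiv : (Fin 2 → K) →ₗ[K] (Fin 2 → K))
    (Matrix.GeneralLinearGroup.toLin g).toLinearEquiv.injective
  one_smul x := by
    induction x using Projectivization.ind with
    | h v hv =>
      show Projectivization.map _ _ _ = _
      rw [Projectivization.map_mk]
      congr 1
      rw [_root_.map_one]; rfl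
  mul_smul g h x := by
    induction x using Projectivization.ind with
    | h v hv =>
      show Projectivization.map _ _ _ = Projectivization.map _ _ (Projectivization.map _ _ _)
      rw [Projectivization.map_mk, Projectivization.map_mk, Projectivization.map_mk]
      congr 1
      show ((↑g : Matrix (Fin 2) (Fin 2) K) * (↑h : Matrix (Fin 2) (Fin 2) K)) *ᵥ v = (↑g : Matrix (Fin 2) (Fin 2) K) *ᵥ ((↑h : Matrix (Fin 2) (Fin 2) K) *ᵥ v)
      rw [Matrix.mulVec_mulVec]

theorem gl_smul_mk (g : GL (Fin 2) K) (v : Fin 2 → K) (hv : v ≠ 0) :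
    g • Projectivization.mk K v hv =
      Projectivization.mk K ((↑g : Matrix (Fin 2) (Fin 2) K) *ᵥ v)
        ((Matrix.GeneralLinearGroup.toLin g).toLinearEquiv.map_ne_zero_iff.mpr hv) := by
  show Projectivization.map _ _ _ = _
  rw [Projectivization.map_mk]
  rfl

theorem center_smul_eq (g : GL (Fin 2) K) (hg : g ∈ Subgroup.center (GL (Fin 2) K)) (x : P1 K) :
    g • x = x := by
  have hcomm : ∀ B : GL (Fin 2) K, B * g = g * B := fun B => Subgroup.mem_center_iff.mp hg B
  have key : ∀ M : Matrix (Fin 2) (Fin 2) K, M.det ≠ 0 →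
      M * (↑g : Matrix (Fin 2) (Fin 2) K) = (↑g : Matrix (Fin 2) (Fin 2) K) * M := by
    intro M hM
    have := hcomm (Matrix.GeneralLinearGroup.mkOfDetNeZero M hM)
    exact congrArg Units.val this
  have h1 : !![(1:K),1;0,1] * (↑g : Matrix (Fin 2) (Fin 2) K) = (↑g : Matrix (Fin 2) (Fin 2) K) * !![(1:K),1;0,1] := key _ (by simp [Matrix.det_fin_two_of])
  have h2 : !![(1:K),0;1,1] * (↑g : Matrix (Fin 2) (Fin 2) K) = (↑g : Matrix (Fin 2) (Fin 2) K) * !![(1:K),0;1,1] := key _ (by simp [Matrix.det_fin_two_of])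
  have e1 := fun i j => congrFun (congrFun h1 i) j
  have e2 := fun i j => congrFun (congrFun h2 i) j
  have hc : (↑g : Matrix (Fin 2) (Fin 2) K) 1 0 = 0 := by
    have := e1 0 0
    simp [Matrix.mul_apply, Fin.sum_univ_two] at this
    linear_combination this
  have hb : (↑g : Matrix (Fin 2) (Fin 2) K) 0 1 = 0 := by
    have := e2 1 1
    simp [Matrix.mul_apply, Fin.sum_univ_two] at this
    linear_combination this
  have had : (↑g : Matrix (Fin 2) (Fin 2) K) 0 0 = (↑g : Matrix (Fin 2) (Fin 2) K) 1 1 := by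
    have := e1 0 1
    simp [Matrix.mul_apply, Fin.sum_univ_two] at this
    linear_combination -this
  -- so A is scalar
  induction x using Projectivization.ind with
  | h v hv =>
    rw [gl_smul_mk]
    apply (Projectivization.mk_eq_mk_iff' ..).mpr
    refine ⟨(↑g : Matrix (Fin 2) (Fin 2) K) 0 0, ?_⟩
    funext i
    fin_cases i <;>
      simp [Matrix.mulVec, dotProduct, Fin.sum_univ_two, hc, hb, ← had, mul_comm]

instance pglAction : MulAction (PGL2 K) (P1 K) :=
  MulAction.compHom _ (QuotientGroup.lift (Subgroup.center (GL (Fin 2) K))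
    (MulAction.toPermHom (GL (Fin 2) K) (P1 K))
    (fun g hg => by
      ext x
      exact center_smul_eq g hg x))

/-- A subset `S` of `PGL(2,K)` is sharply transitive (regular) on the projective line if
for all `x, y` there is a unique `g ∈ S` with `g • x = y`. -/
def SharplyTransitive (S : Set (PGL2 K)) : Prop :=
  ∀ x y : P1 K, ∃! g : PGL2 K, g ∈ S ∧ g • x = y

/-- The point `(1 : 0)` of the projective line. -/
def pt10 (K : Type*) [Field K] : P1 K :=
  Projectivization.mk K ![1, 0] (by intro h; simpa using congrFun h 0)

/-- The point `(0 : 1)` of the projective line. -/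
def pt01 (K : Type*) [Field K] : P1 K :=
  Projectivization.mk K ![0, 1] (by intro h; simpa using congrFun h 1)

/-
For every `x`, sharp transitivity gives a unique `k ∈ S` with `k • h⁻¹ x = g x`, so that
`g⁻¹ k h⁻¹` fixes `x`. Nontrivial elements of `S` have no fixed points, hence `k ≠ g` and `k ≠ h`.
Since `|S| = |P¹(K)|`, the map `x ↦ k` sends `P¹(K)` into the strictly smaller set `S \ {g, h}`,
and two distinct points with the same `k` are the two fixed points.
-/

section SharplyTransitiveSet

variable {G X : Type*} [Group G] [MulAction G X] {S : Set G}

theorem smul_ne_self_of_sharplyTransitive (hS : ∀ x y : X, ∃! s, s ∈ S ∧ s • x = y)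
    (h1 : 1 ∈ S) {s : G} (hs : s ∈ S) (hs1 : s ≠ 1) (x : X) : s • x ≠ x := fun hx =>
  hs1 ((hS x x).unique ⟨hs, hx⟩ ⟨h1, one_smul G x⟩)

theorem natCard_eq_of_sharplyTransitive [Nonempty X]
    (hS : ∀ x y : X, ∃! s, s ∈ S ∧ s • x = y) : Nat.card S = Nat.card X := by
  obtain ⟨x₀⟩ := ‹Nonempty X›
  refine Nat.card_eq_of_bijective (fun s : S => (s : G) • x₀) ⟨fun s t hst => ?_, fun y => ?_⟩
  · exact Subtype.ext ((hS x₀ _).unique ⟨s.2, rfl⟩ ⟨t.2, hst.symm⟩)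
  · obtain ⟨k, ⟨hk, hky⟩, -⟩ := hS x₀ y
    exact ⟨⟨k, hk⟩, hky⟩

theorem exists_mem_ne_ne_fixing_two_points_of_sharplyTransitive [Finite X] [Nonempty X]
    (hS : ∀ x y : X, ∃! s, s ∈ S ∧ s • x = y) (h1 : 1 ∈ S) {g h : G}
    (hg : g ∈ S) (hh : h ∈ S) (hg1 : g ≠ 1) (hh1 : h ≠ 1) :
    ∃ k ∈ S, k ≠ g ∧ k ≠ h ∧
      ∃ x y : X, x ≠ y ∧ (g⁻¹ * k * h⁻¹) • x = x ∧ (g⁻¹ * k * h⁻¹) • y = y := by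
  choose F hFS hF using fun x : X => (hS (h⁻¹ • x) (g • x)).exists
  have hfix : ∀ x, (g⁻¹ * F x * h⁻¹) • x = x := fun x => by
    rw [mul_smul, mul_smul, hF x, inv_smul_smul]
  have hFg : ∀ x, F x ≠ g := fun x hFx => by
    have hx : h⁻¹ • x = x := smul_left_cancel g (hFx ▸ hF x)
    exact smul_ne_self_of_sharplyTransitive hS h1 hh hh1 x (inv_smul_eq_iff.mp hx).symm
  have hFh : ∀ x, F x ≠ h := fun x hFx => by
    have hx : x = g • x := by simpa only [hFx, smul_inv_smul] using hF x
    exact smul_ne_self_of_sharplyTransitive hS h1 hg hg1 x hx.symm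
  have hSfin : S.Finite := by
    have : Finite S := Nat.finite_of_card_ne_zero
      ((natCard_eq_of_sharplyTransitive hS).trans_ne Nat.card_pos.ne')
    exact Set.toFinite S
  have hcard : (S \ {g, h}).ncard < (Set.univ : Set X).ncard := by
    rw [Set.ncard_univ, ← natCard_eq_of_sharplyTransitive hS, ← Nat.card_coe_set_eq]
    exact Set.ncard_lt_ncard ⟨Set.sdiff_subset, fun hsub => (hsub hg).2 (Or.inl rfl)⟩ hSfin
  obtain ⟨x, -, y, -, hxy, hFxy⟩ := Set.exists_ne_map_eq_of_ncard_lt_of_maps_to hcard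
    (fun x _ => ⟨hFS x, by simp [hFg x, hFh x]⟩) hSfin.sdiff
  exact ⟨F x, hFS x, hFg x, hFh x, x, y, hxy, hfix x, hFxy ▸ hfix y⟩

end SharplyTransitiveSet

theorem exists_k_with_two_fixed_points
    {K : Type*} [Field K] [Fintype K] (S : Set (PGL2 K)) (hS : SharplyTransitive S)
    (h1 : (1 : PGL2 K) ∈ S) (g h : PGL2 K) (hg : g ∈ S) (hh : h ∈ S)
    (hg1 : g ≠ 1) (hh1 : h ≠ 1) :
    ∃ k ∈ S, k ≠ g ∧ k ≠ h ∧
      ∃ x y : P1 K, x ≠ y ∧ (g⁻¹ * k * h⁻¹) • x = x ∧ (g⁻¹ * k * h⁻¹) • y = y :=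
  have : Nonempty (P1 K) := ⟨pt10 K⟩
  exists_mem_ne_ne_fixing_two_points_of_sharplyTransitive hS h1 hg hh hg1 hh1

end
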